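/- arXiv:1407.0198 — 3 statements merged into one kernel-verified Lean document; each statement's English description precedes it below -/
import Mathlib

section
/- A weight diagram D is piecewise disconnected if and only if its cap diagram satisfies: whenever two caps A and B are both nested below the same cap C, either A is nested below B or B is nested below A. -/
/-! ## Weight diagrams, cap diagrams and right paths (Brundan–Stroppel / Brundan),
as used in "A Weyl-type character formula for PDC modules of gl(m|n)". -/

/-- The symbols of a weight diagram: `∨`, `∧`, `×`, `∘`. -/
inductive Tag : Type
  | vee | wedge | ex | circ
  deriving DecidableEq

/-- A weight diagram: a function `ℤ → {∨,∧,×,∘}` with finitely many non-`∧` entries. -/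
structure WDiag : Type where
  D : ℤ → Tag
  finite : {t : ℤ | D t ≠ Tag.wedge}.Finite

namespace WDiag

/-- The (finite) set of positions of `∨`'s. -/
noncomputable def veeFinset (W : WDiag) : Finset ℤ :=
  W.finite.toFinset.filter (fun t => W.D t = Tag.vee)

/-- The position of the `i`-th `∨`, counted from the left starting with `i = 0`
(junk value if `i` is out of range). -/
noncomputable def nthVee (W : WDiag) (i : ℕ) : ℤ :=
  (W.veeFinset.sort (· ≤ ·)).getD i 0

/-- In the open interval `(p,q)` there are as many `∨`'s as `∧`'s. -/
def capBal (W : WDiag) (p q : ℤ) : Prop :=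
  ((Finset.Ioo p q).filter (fun t => W.D t = Tag.vee)).card =
    ((Finset.Ioo p q).filter (fun t => W.D t = Tag.wedge)).card

/-- `(p,q)` is a cap of the cap diagram of `W`: `p` carries `∨`, `q` is the first `∧` to the
right of `p` such that the `∨`'s and `∧`'s strictly between `p` and `q` pair off.  This
balance condition characterizes the matching obtained by processing the `∨`'s right to left,
joining each `∨` to the first unmarked `∧` to its right. -/
def IsCap (W : WDiag) (p q : ℤ) : Prop :=
  W.D p = Tag.vee ∧ W.D q = Tag.wedge ∧ p < q ∧ W.capBal p q ∧
    ∀ q', p < q' → q' < q → W.D q' = Tag.wedge → ¬ W.capBal p q'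

/-- Cap `(p,q)` is nested (strictly) below cap `(p',q')`. -/
def CapBelow (p q p' q' : ℤ) : Prop := p' < p ∧ q < q'

/-- The diagram obtained by exchanging the `∨` at `p` with the `∧` at `q`. -/
noncomputable def moveDiag (W : WDiag) (p q : ℤ) : WDiag where
  D := fun t => if t = p then Tag.wedge else if t = q then Tag.vee else W.D t
  finite := by
    classical
    refine Set.Finite.subset (W.finite.union (Set.toFinite {p, q})) ?_
    intro t ht
    by_cases h1 : t = p
    · exact Or.inr (by simp [h1])
    · by_cases h2 : t = q
      · exact Or.inr (by simp [h2])
      · left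
        simpa [Set.mem_setOf_eq, h1, h2] using ht

/-- The right move `R_i` (as a relation): exchange the `i`-th `∨` (counted from the left,
`0`-based) with the `∧` to which it is joined by a cap. -/
def RMove (i : ℕ) (W W' : WDiag) : Prop :=
  i < W.veeFinset.card ∧ ∃ q, W.IsCap (W.nthVee i) q ∧ W' = W.moveDiag (W.nthVee i) q

/-- `PathRel l W W'`: applying the right moves recorded in `l` (head first) turns `W`
into `W'`. -/
def PathRel : List ℕ → WDiag → WDiag → Prop
  | [], W, W' => W = W'
  | i :: l, W, W' => ∃ E, RMove i W E ∧ PathRel l E W'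

/-- `l` is a right path from `W` to `W'`: a sequence of right moves
`R_{i₁} ∘ ⋯ ∘ R_{i_k}` with `i₁ ≤ … ≤ i_k`.  Since the composition is applied rightmost
factor first, the list of moves in order of application is weakly decreasing. -/
def IsRightPath (W W' : WDiag) (l : List ℕ) : Prop :=
  l.Chain' (fun a b => b ≤ a) ∧ PathRel l W W'

/-- `W` and `W'` have the same typical entries (`×`'s and `∘`'s). -/
def SameTypical (W W' : WDiag) : Prop :=
  ∀ t, (W.D t = Tag.ex ↔ W'.D t = Tag.ex) ∧ (W.D t = Tag.circ ↔ W'.D t = Tag.circ)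

/-- Totally connected: between any two `∨`'s there is no `∧`. -/
def TC (W : WDiag) : Prop :=
  ∀ p q t, W.D p = Tag.vee → W.D q = Tag.vee → p < t → t < q → W.D t ≠ Tag.wedge

/-- Totally disconnected: between any two `∨`'s there is at least one `∧`. -/
def TDC (W : WDiag) : Prop :=
  ∀ p q, W.D p = Tag.vee → W.D q = Tag.vee → p < q → ∃ t, p < t ∧ t < q ∧ W.D t = Tag.wedge

/-- `[a,b]` is an atypical component: a maximal nonempty interval containing a `∨` and
no `∧` (maximality amounts to `∧`'s at the two positions just outside). -/
def IsComp (W : WDiag) (a b : ℤ) : Prop :=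
  a ≤ b ∧ (∀ t ∈ Finset.Icc a b, W.D t ≠ Tag.wedge) ∧ (∃ t ∈ Finset.Icc a b, W.D t = Tag.vee)
    ∧ W.D (a - 1) = Tag.wedge ∧ W.D (b + 1) = Tag.wedge

/-- Piecewise disconnected (PDC): for any two consecutive atypical components `T_i = [a,b]`,
`T_{i+1} = [a',b']` (no atypical component strictly between them), the number `t_i` of `∨`'s
in `T_i` is at most the number `s_i` of `∧`'s strictly between `T_i` and `T_{i+1}`. -/
def PDC (W : WDiag) : Prop :=
  ∀ a b a' b', W.IsComp a b → W.IsComp a' b' → b < a' →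
    (∀ a'' b'', W.IsComp a'' b'' → ¬(b < a'' ∧ b'' < a')) →
    ((Finset.Icc a b).filter (fun t => W.D t = Tag.vee)).card ≤
      ((Finset.Ioo b a').filter (fun t => W.D t = Tag.wedge)).card

/-- Positions `x` and `y` lie in the same atypical component: no `∧` in between
(inclusively). -/
def SameComp (W : WDiag) (x y : ℤ) : Prop :=
  ∀ t ∈ Finset.Icc (min x y) (max x y), W.D t ≠ Tag.wedge

/-- A labeled right move on a diagram with `r` labeled `∨`'s (the function `Fin r → ℤ`
records the current position of each labeled `∨`): the move `R_i` moves the label currently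
occupying the position of the `i`-th `∨`. -/
def LMove (r : ℕ) (i : ℕ) (S S' : WDiag × (Fin r → ℤ)) : Prop :=
  ∃ (k : Fin r) (q : ℤ), S.2 k = S.1.nthVee i ∧ i < S.1.veeFinset.card ∧
    S.1.IsCap (S.2 k) q ∧ S'.1 = S.1.moveDiag (S.2 k) q ∧ S'.2 = Function.update S.2 k q

/-- Labeled version of `PathRel`. -/
def LPathRel (r : ℕ) : List ℕ → WDiag × (Fin r → ℤ) → WDiag × (Fin r → ℤ) → Prop
  | [], S, S' => S = S'
  | i :: l, S, S' => ∃ E, LMove r i S E ∧ LPathRel r l E S'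

/-- The path `l` from `Wmu` to `Wlam` induces the permutation `σ ∈ Tag(r)`: labeling the `∨`'s
of `Wmu` left to right by `0, …, r−1` and following them along the path, the `k`-th `∨` of
`Wmu` ends at the position of the `σ(k)`-th `∨` of `Wlam`. -/
def Induces (r : ℕ) (Wmu Wlam : WDiag) (l : List ℕ) (σ : Equiv.Perm (Fin r)) : Prop :=
  ∃ f : Fin r → ℤ, LPathRel r l (Wmu, fun k => Wmu.nthVee k) (Wlam, f) ∧
    ∀ k : Fin r, f k = Wlam.nthVee (σ k)

end WDiag

/-- The weight diagram of a strictly dominant integral weight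
`λ^ρ = Σ a_i ε_i − Σ b_j δ_j` of `gl(m|n)`:  put `∨` at `t` if `t ∈ {a_i} ∩ {b_j}`,
`×` if `t ∈ {a_i} ∖ {b_j}`, `∘` if `t ∈ {b_j} ∖ {a_i}`, and `∧` otherwise. -/
noncomputable def wdOf {m n : ℕ} (a : Fin m → ℤ) (b : Fin n → ℤ) : WDiag := by
  classical
  refine ⟨fun t => if ∃ i, a i = t then (if ∃ j, b j = t then Tag.vee else Tag.ex)
      else (if ∃ j, b j = t then Tag.circ else Tag.wedge), ?_⟩
  refine Set.Finite.subset ((Set.finite_range a).union (Set.finite_range b)) ?_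
  intro t ht
  by_cases hA : ∃ i, a i = t
  · exact Or.inl (by obtain ⟨i, hi⟩ := hA; exact ⟨i, hi⟩)
  · by_cases hB : ∃ j, b j = t
    · exact Or.inr (by obtain ⟨j, hj⟩ := hB; exact ⟨j, hj⟩)
    · exact absurd (by simp [Set.mem_setOf_eq, hA, hB]) ht

namespace WDiag
open Finset

variable (W : WDiag)

/-- number of vees strictly between `p` and `t`. -/
noncomputable def vcnt (p t : ℤ) : ℕ :=
  ((Finset.Ioo p t).filter (fun x => W.D x = Tag.vee)).card

noncomputable def wcnt (p t : ℤ) : ℕ :=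
  ((Finset.Ioo p t).filter (fun x => W.D x = Tag.wedge)).card

noncomputable def hh (p t : ℤ) : ℤ := (W.vcnt p t : ℤ) - (W.wcnt p t : ℤ)

lemma capBal_iff_hh (p t : ℤ) : W.capBal p t ↔ W.hh p t = 0 := by
  unfold capBal hh vcnt wcnt
  omega

lemma cnt_succ (P : ℤ → Prop) [DecidablePred P] (p t : ℤ) (h : p < t) :
    ((Finset.Ioo p (t+1)).filter P).card =
      ((Finset.Ioo p t).filter P).card + (if P t then 1 else 0) := by
  have hins : Finset.Ioo p (t+1) = insert t (Finset.Ioo p t) := by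
    ext x
    simp only [Finset.mem_Ioo, Finset.mem_insert]
    omega
  rw [hins, Finset.filter_insert]
  split
  · rw [Finset.card_insert_of_notMem (by simp)]
  · simp

lemma hh_base (p : ℤ) : W.hh p (p+1) = 0 := by
  have : Finset.Ioo p (p+1) = ∅ := by
    ext x; simp only [Finset.mem_Ioo, Finset.notMem_empty, iff_false]; omega
  simp [hh, vcnt, wcnt, this]

lemma hh_succ (p t : ℤ) (h : p < t) :
    W.hh p (t+1) = W.hh p t +
      (if W.D t = Tag.vee then 1 else if W.D t = Tag.wedge then -1 else 0) := by
  classical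
  unfold hh vcnt wcnt
  rw [cnt_succ (fun x => W.D x = Tag.vee) p t h, cnt_succ (fun x => W.D x = Tag.wedge) p t h]
  rcases ht : W.D t <;> simp [ht] <;> omega

/-- If no wedge strictly inside `(p,q)` is balanced, then `hh` is nonnegative on `(p,q]`. -/
lemma hh_nonneg_of (p q : ℤ)
    (hq0 : ∀ t, p < t → t < q → W.D t = Tag.wedge → ¬ W.capBal p t) :
    ∀ t, p < t → t ≤ q → 0 ≤ W.hh p t := by
  suffices H : ∀ n : ℕ, ∀ t, t = p + 1 + n → t ≤ q → 0 ≤ W.hh p t by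
    intro t ht htq
    exact H (t - (p+1)).toNat t (by omega) htq
  intro n
  induction n with
  | zero => intro t ht _; subst ht; simp [W.hh_base p]
  | succ k ih =>
    intro t ht htq
    have ht' : t = (p + 1 + k) + 1 := by omega
    set t0 : ℤ := p + 1 + (k:ℤ) with ht0
    have hpt0 : p < t0 := by omega
    have h0 : 0 ≤ W.hh p t0 := ih t0 rfl (by omega)
    have hstep := W.hh_succ p t0 hpt0
    rw [ht', hstep]
    by_cases hv : W.D t0 = Tag.vee
    · simp [hv]; omega
    · by_cases hw : W.D t0 = Tag.wedge
      · have hne : W.hh p t0 ≠ 0 := by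
          intro h00
          exact hq0 t0 hpt0 (by omega) hw ((W.capBal_iff_hh p t0).mpr h00)
        simp [hv, hw]; omega
      · simp [hv, hw]; omega

lemma IsCap.hh_nonneg {W : WDiag} {p q : ℤ} (h : W.IsCap p q) :
    ∀ t, p < t → t ≤ q → 0 ≤ W.hh p t :=
  W.hh_nonneg_of p q (fun t h1 h2 h3 => h.2.2.2.2 t h1 h2 h3)

lemma IsCap.hh_pos {W : WDiag} {p q : ℤ} (h : W.IsCap p q) {t : ℤ}
    (h1 : p < t) (h2 : t < q) (h3 : W.D t = Tag.wedge) : 0 < W.hh p t := by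
  have hge := h.hh_nonneg t h1 (le_of_lt h2)
  have hne : W.hh p t ≠ 0 := fun h0 => h.2.2.2.2 t h1 h2 h3 ((W.capBal_iff_hh p t).mpr h0)
  omega

lemma isCap_of_hh (p q : ℤ) (hp : W.D p = Tag.vee) (hq : W.D q = Tag.wedge) (hpq : p < q)
    (hbal : W.hh p q = 0) (hnn : ∀ t, p < t → t ≤ q → 0 ≤ W.hh p t) : W.IsCap p q := by
  refine ⟨hp, hq, hpq, (W.capBal_iff_hh p q).mpr hbal, ?_⟩
  intro q' h1 h2 h3 hbal'
  have h0 : W.hh p q' = 0 := (W.capBal_iff_hh p q').mp hbal'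
  have hstep := W.hh_succ p q' h1
  have : 0 ≤ W.hh p (q'+1) := hnn (q'+1) (by omega) (by omega)
  rw [hstep, h0] at this
  simp [h3] at this

lemma eventually_wedge_right : ∃ N : ℤ, ∀ t, N ≤ t → W.D t = Tag.wedge := by
  obtain ⟨N, hN⟩ := W.finite.bddAbove
  refine ⟨N + 1, fun t ht => ?_⟩
  by_contra hne
  have := hN (show t ∈ {t | W.D t ≠ Tag.wedge} from hne)
  omega

lemma eventually_wedge_left : ∃ N : ℤ, ∀ t, t ≤ N → W.D t = Tag.wedge := by
  obtain ⟨N, hN⟩ := W.finite.bddBelow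
  refine ⟨N - 1, fun t ht => ?_⟩
  by_contra hne
  have := hN (show t ∈ {t | W.D t ≠ Tag.wedge} from hne)
  omega

/-- every `∨` lies in an atypical component -/
lemma comp_of_vee {t : ℤ} (h : W.D t = Tag.vee) :
    ∃ a b, W.IsComp a b ∧ a ≤ t ∧ t ≤ b := by
  classical
  obtain ⟨Nl, hNl⟩ := W.eventually_wedge_left
  obtain ⟨Nr, hNr⟩ := W.eventually_wedge_right
  -- greatest a ≤ t with D (a-1) = wedge
  obtain ⟨a, ⟨hat, haw⟩, hamax⟩ :=
    Int.exists_greatest_of_bdd (P := fun s => s ≤ t ∧ W.D (s-1) = Tag.wedge)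
      ⟨t, fun z hz => hz.1⟩
      ⟨min Nl t, min_le_right _ _, hNl _ (by omega)⟩
  obtain ⟨b, ⟨htb, hbw⟩, hbmin⟩ :=
    Int.exists_least_of_bdd (P := fun s => t ≤ s ∧ W.D (s+1) = Tag.wedge)
      ⟨t, fun z hz => hz.1⟩
      ⟨max Nr t, le_max_right _ _, hNr _ (by omega)⟩
  have hleft : ∀ u, a ≤ u → u ≤ t → W.D u ≠ Tag.wedge := by
    intro u h1 h2 hu
    have hut : u ≠ t := fun e => by rw [e] at hu; rw [h] at hu; exact Tag.noConfusion hu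
    have := hamax (u+1) ⟨by omega, by simpa using hu⟩
    omega
  have hright : ∀ u, t ≤ u → u ≤ b → W.D u ≠ Tag.wedge := by
    intro u h1 h2 hu
    have hut : u ≠ t := fun e => by rw [e] at hu; rw [h] at hu; exact Tag.noConfusion hu
    have := hbmin (u-1) ⟨by omega, by simpa using hu⟩
    omega
  refine ⟨a, b, ⟨by omega, ?_, ⟨t, by simp [Finset.mem_Icc]; omega, h⟩, haw, hbw⟩, hat, htb⟩
  intro u hu
  simp only [Finset.mem_Icc] at hu
  rcases le_or_gt u t with h1 | h1
  · exact hleft u hu.1 h1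
  · exact hright u (le_of_lt h1) hu.2

/-- two components sharing a point are equal. -/
lemma comp_unique {a b a' b' x : ℤ} (h1 : W.IsComp a b) (h2 : W.IsComp a' b')
    (ha : a ≤ x) (hb : x ≤ b) (ha' : a' ≤ x) (hb' : x ≤ b') : a = a' ∧ b = b' := by
  obtain ⟨-, hno1, -, haw1, hbw1⟩ := h1
  obtain ⟨-, hno2, -, haw2, hbw2⟩ := h2
  constructor
  · by_contra hne
    rcases lt_or_gt_of_ne hne with hlt | hlt
    · exact hno1 (a'-1) (by simp [Finset.mem_Icc]; omega) haw2
    · exact hno2 (a-1) (by simp [Finset.mem_Icc]; omega) haw1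
  · by_contra hne
    rcases lt_or_gt_of_ne hne with hlt | hlt
    · exact hno2 (b+1) (by simp [Finset.mem_Icc]; omega) hbw1
    · exact hno1 (b'+1) (by simp [Finset.mem_Icc]; omega) hbw2

/-- Every `∨` is the left end of a cap. -/
lemma cap_exists {p : ℤ} (hp : W.D p = Tag.vee) : ∃ q, W.IsCap p q := by
  classical
  obtain ⟨N, hN⟩ := W.eventually_wedge_right
  -- find a point where hh ≤ 0
  have hdesc : ∀ k : ℕ, ∀ t0, p < t0 → N ≤ t0 → W.hh p (t0 + k) = W.hh p t0 - k := by
    intro k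
    induction k with
    | zero => intro t0 _ _; simp
    | succ m ih =>
      intro t0 h1 h2
      have : (t0 + (m+1:ℕ) : ℤ) = (t0 + m) + 1 := by push_cast; ring
      rw [this, W.hh_succ p (t0+m) (by omega)]
      have hw := hN (t0 + m) (by omega)
      rw [ih t0 h1 h2]
      simp [hw]
      push_cast
      ring
  set t0 : ℤ := max N (p+1) with ht0
  set T : ℤ := t0 + ((W.hh p t0).toNat + 1 : ℕ) with hT
  have hhT : W.hh p T ≤ -1 := by
    rw [hT, hdesc _ t0 (by omega) (by omega)]
    push_cast
    omega
  have hTw : W.D T = Tag.wedge := hN T (by omega)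
  have hTp : p < T := by omega
  obtain ⟨q, ⟨hq1, hq2, hq3⟩, hqmin⟩ :=
    Int.exists_least_of_bdd (P := fun t => p < t ∧ W.D t = Tag.wedge ∧ W.hh p t ≤ 0)
      ⟨p, fun z hz => le_of_lt hz.1⟩
      ⟨T, hTp, hTw, by omega⟩
  have hnn : ∀ t, p < t → t ≤ q → 0 ≤ W.hh p t := by
    apply W.hh_nonneg_of
    intro t h1 h2 h3 hbal
    have h0 : W.hh p t = 0 := (W.capBal_iff_hh p t).mp hbal
    have := hqmin t ⟨h1, h3, by omega⟩
    omega
  have hq0 : W.hh p q = 0 := le_antisymm hq3 (hnn q hq1 le_rfl)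
  exact ⟨q, W.isCap_of_hh p q hp hq2 hq1 hq0 hnn⟩

lemma cnt_split (P : ℤ → Prop) [DecidablePred P] {p p' t : ℤ} (h1 : p < p') (h2 : p' < t) :
    ((Finset.Ioo p t).filter P).card =
      ((Finset.Ioo p p').filter P).card + ((Finset.Ioo p' t).filter P).card
        + (if P p' then 1 else 0) := by
  have hu : Finset.Ioo p t = Finset.Ioo p p' ∪ insert p' (Finset.Ioo p' t) := by
    ext x
    simp only [Finset.mem_Ioo, Finset.mem_union, Finset.mem_insert]
    omega
  have hd : Disjoint (Finset.Ioo p p') (insert p' (Finset.Ioo p' t)) := by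
    rw [Finset.disjoint_left]
    intro x hx hx'
    simp only [Finset.mem_Ioo] at hx
    simp only [Finset.mem_insert, Finset.mem_Ioo] at hx'
    omega
  rw [hu, Finset.filter_union, Finset.card_union_of_disjoint
    (Finset.disjoint_filter_filter hd), Finset.filter_insert]
  split
  · rw [Finset.card_insert_of_notMem (by simp)]
    omega
  · simp

lemma hh_split {p p' t : ℤ} (h1 : p < p') (h2 : p' < t) (hp' : W.D p' = Tag.vee) :
    W.hh p t = W.hh p p' + 1 + W.hh p' t := by
  unfold hh vcnt wcnt
  rw [cnt_split (fun x => W.D x = Tag.vee) h1 h2,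
      cnt_split (fun x => W.D x = Tag.wedge) h1 h2]
  simp only [hp']
  simp
  push_cast
  ring

/-- caps do not cross -/
lemma cap_noncross {p q p' q' : ℤ} (hc : W.IsCap p q) (hc' : W.IsCap p' q')
    (h1 : p < p') (h2 : p' < q) : q' < q := by
  by_contra hle
  push_neg at hle
  have hs := W.hh_split h1 h2 hc'.1
  have hq0 : W.hh p q = 0 := (W.capBal_iff_hh p q).mp hc.2.2.2.1
  have ha : 0 ≤ W.hh p p' := hc.hh_nonneg p' h1 (le_of_lt h2)
  have hb : 0 ≤ W.hh p' q := hc'.hh_nonneg q h2 hle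
  omega

lemma cap_unique {p q q' : ℤ} (hc : W.IsCap p q) (hc' : W.IsCap p q') : q = q' := by
  by_contra hne
  rcases lt_or_gt_of_ne hne with hlt | hlt
  · exact hc'.2.2.2.2 q hc.2.2.1 hlt hc.2.1 hc.2.2.2.1
  · exact hc.2.2.2.2 q' hc'.2.2.1 hlt hc'.2.1 hc'.2.2.2.1

/-- Under PDC, no `∧` followed by a `∨` strictly inside a cap. -/
lemma pdc_no_wedge_vee (hpdc : W.PDC) {p q : ℤ} (hc : W.IsCap p q) :
    ∀ u v, p < u → u < v → v < q → W.D u = Tag.wedge → W.D v = Tag.vee → False := by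
  classical
  suffices H : ∀ n : ℕ, ∀ u v, p < u → u < v → v < q → W.D u = Tag.wedge →
      W.D v = Tag.vee → v - p ≤ (n : ℤ) → False by
    intro u v h1 h2 h3 h4 h5
    exact H (v - p).toNat u v h1 h2 h3 h4 h5 (by omega)
  intro n
  induction n with
  | zero => intro u v h1 h2 h3 _ _ hn; omega
  | succ k ih =>
    intro u v h1 h2 h3 hu hv hn
    obtain ⟨a, b, hab, hap, hpb⟩ := W.comp_of_vee hc.1
    obtain ⟨a', b', hab', hav, hvb⟩ := W.comp_of_vee hv
    have hbu : b < u := by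
      by_contra h; push_neg at h
      exact hab.2.1 u (Finset.mem_Icc.mpr ⟨by omega, h⟩) hu
    have hua' : u < a' := by
      by_contra h; push_neg at h
      exact hab'.2.1 u (Finset.mem_Icc.mpr ⟨h, by omega⟩) hu
    by_cases hbet : ∃ a'' b'', W.IsComp a'' b'' ∧ b < a'' ∧ b'' < a'
    · obtain ⟨a'', b'', hab'', h1'', h2''⟩ := hbet
      obtain ⟨v'', hv''mem, hv''⟩ := hab''.2.2.1
      rw [Finset.mem_Icc] at hv''mem
      have hw'' : W.D (a'' - 1) = Tag.wedge := hab''.2.2.2.1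
      have hne : a'' - 1 ≠ p := by
        intro e
        rw [e, hc.1] at hw''
        exact Tag.noConfusion hw''
      exact ih (a''-1) v'' (by omega) (by omega) (by omega) hw'' hv'' (by omega)
    · have hba' : b < a' := by omega
      have hcard := hpdc a b a' b' hab hab' hba'
        (fun a'' b'' hc'' hx => hbet ⟨a'', b'', hc'', hx.1, hx.2⟩)
      have hw0 : W.D (a'-1) = Tag.wedge := hab'.2.2.2.1
      have hpos := hc.hh_pos (show p < a'-1 by omega) (show a'-1 < q by omega) hw0
      have hvsub : (Finset.Ioo p (a'-1)).filter (fun x => W.D x = Tag.vee) ⊆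
          ((Finset.Icc a b).filter (fun x => W.D x = Tag.vee)).erase p := by
        intro x hx
        rw [Finset.mem_filter, Finset.mem_Ioo] at hx
        obtain ⟨⟨hx1, hx2⟩, hx3⟩ := hx
        rcases le_or_gt x b with hxle | hxgt
        · exact Finset.mem_erase.mpr ⟨by omega,
            Finset.mem_filter.mpr ⟨Finset.mem_Icc.mpr ⟨by omega, hxle⟩, hx3⟩⟩
        · exfalso
          obtain ⟨ax, bx, habx, hax, hxb⟩ := W.comp_of_vee hx3
          have hbax : b < ax := by
            by_contra hle; push_neg at hle
            have := W.comp_unique habx hab hle (by omega) (by omega) le_rfl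
            omega
          have hbxa : bx < a' := by
            by_contra hle; push_neg at hle
            have := W.comp_unique habx hab' (by omega) hle le_rfl hab'.1
            omega
          exact hbet ⟨ax, bx, habx, hbax, hbxa⟩
      have hpmem : p ∈ (Finset.Icc a b).filter (fun x => W.D x = Tag.vee) :=
        Finset.mem_filter.mpr ⟨Finset.mem_Icc.mpr ⟨hap, hpb⟩, hc.1⟩
      have hvle := Finset.card_le_card hvsub
      rw [Finset.card_erase_of_mem hpmem] at hvle
      have hwsub : ((Finset.Ioo b a').filter (fun x => W.D x = Tag.wedge)).erase (a'-1) ⊆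
          (Finset.Ioo p (a'-1)).filter (fun x => W.D x = Tag.wedge) := by
        intro x hx
        rw [Finset.mem_erase, Finset.mem_filter, Finset.mem_Ioo] at hx
        obtain ⟨hx1, ⟨hx2, hx3⟩, hx4⟩ := hx
        exact Finset.mem_filter.mpr ⟨Finset.mem_Ioo.mpr ⟨by omega, by omega⟩, hx4⟩
      have hw0mem : a'-1 ∈ (Finset.Ioo b a').filter (fun x => W.D x = Tag.wedge) :=
        Finset.mem_filter.mpr ⟨Finset.mem_Ioo.mpr ⟨by omega, by omega⟩, hw0⟩
      have hwge := Finset.card_le_card hwsub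
      rw [Finset.card_erase_of_mem hw0mem] at hwge
      have hs1 : 1 ≤ ((Finset.Ioo b a').filter (fun x => W.D x = Tag.wedge)).card :=
        Finset.card_pos.mpr ⟨_, hw0mem⟩
      have hpos' : 0 < (((Finset.Ioo p (a'-1)).filter (fun x => W.D x = Tag.vee)).card : ℤ)
          - (((Finset.Ioo p (a'-1)).filter (fun x => W.D x = Tag.wedge)).card : ℤ) := hpos
      omega
/-- From a violation of PDC, construct three caps violating the nesting condition. -/
lemma not_pdc_config {a b a' b' : ℤ} (hab : W.IsComp a b) (hab' : W.IsComp a' b')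
    (hba' : b < a') (hnbet : ∀ a'' b'', W.IsComp a'' b'' → ¬(b < a'' ∧ b'' < a'))
    (hgt : ((Finset.Ioo b a').filter (fun t => W.D t = Tag.wedge)).card <
           ((Finset.Icc a b).filter (fun t => W.D t = Tag.vee)).card) :
    ∃ p q pA pB, W.IsCap p q ∧ W.IsCap pA (b+1) ∧ W.IsCap pB (b'+1) ∧
      p < pA ∧ pA ≤ b ∧ a' ≤ pB ∧ pB ≤ b' ∧ b + 1 < q ∧ b' + 1 < q := by
  classical
  set V : Finset ℤ := (Finset.Icc a b).filter (fun t => W.D t = Tag.vee) with hV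
  set V' : Finset ℤ := (Finset.Icc a' b').filter (fun t => W.D t = Tag.vee) with hV'
  set G : Finset ℤ := (Finset.Ioo b a').filter (fun t => W.D t = Tag.wedge) with hG
  have hb1a' : b + 1 < a' := by
    rcases eq_or_lt_of_le (show b + 1 ≤ a' by omega) with he | h
    · exfalso
      exact hab'.2.1 a' (Finset.mem_Icc.mpr ⟨le_rfl, hab'.1⟩) (he ▸ hab.2.2.2.2)
    · exact h
  have hb1G : b + 1 ∈ G := Finset.mem_filter.mpr
    ⟨Finset.mem_Ioo.mpr ⟨by omega, hb1a'⟩, hab.2.2.2.2⟩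
  have hs1 : 1 ≤ G.card := Finset.card_pos.mpr ⟨_, hb1G⟩
  have ht2 : 1 < V.card := by omega
  have hVne : V.Nonempty := Finset.card_pos.mp (by omega)
  have hV'ne : V'.Nonempty := by
    obtain ⟨t, ht, htv⟩ := hab'.2.2.1
    exact ⟨t, Finset.mem_filter.mpr ⟨ht, htv⟩⟩
  set p := V.min' hVne with hp
  set pA := V.max' hVne with hpA
  set pB := V'.max' hV'ne with hpB
  have hppA : p < pA := Finset.min'_lt_max'_of_card V ht2
  have hpmem : p ∈ V := V.min'_mem hVne
  have hpAmem : pA ∈ V := V.max'_mem hVne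
  have hpBmem : pB ∈ V' := V'.max'_mem hV'ne
  rw [hV, Finset.mem_filter, Finset.mem_Icc] at hpmem hpAmem
  rw [hV', Finset.mem_filter, Finset.mem_Icc] at hpBmem
  -- cap A
  have hcapA : W.IsCap pA (b+1) := by
    have hz : ∀ t, pA < t → t ≤ b + 1 → W.hh pA t = 0 := by
      intro t h1 h2
      unfold hh vcnt wcnt
      rw [Finset.filter_eq_empty_iff.mpr, Finset.filter_eq_empty_iff.mpr]
      · simp
      · intro x hx hw
        rw [Finset.mem_Ioo] at hx
        exact hab.2.1 x (Finset.mem_Icc.mpr ⟨by omega, by omega⟩) hw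
      · intro x hx hv
        rw [Finset.mem_Ioo] at hx
        have : x ≤ pA := Finset.le_max' V x
          (Finset.mem_filter.mpr ⟨Finset.mem_Icc.mpr ⟨by omega, by omega⟩, hv⟩)
        omega
    exact W.isCap_of_hh pA (b+1) hpAmem.2 hab.2.2.2.2 (by omega) (hz (b+1) (by omega) le_rfl)
      (fun t h1 h2 => le_of_eq (hz t h1 h2).symm)
  -- cap B
  have hcapB : W.IsCap pB (b'+1) := by
    have hz : ∀ t, pB < t → t ≤ b' + 1 → W.hh pB t = 0 := by
      intro t h1 h2
      unfold hh vcnt wcnt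
      rw [Finset.filter_eq_empty_iff.mpr, Finset.filter_eq_empty_iff.mpr]
      · simp
      · intro x hx hw
        rw [Finset.mem_Ioo] at hx
        exact hab'.2.1 x (Finset.mem_Icc.mpr ⟨by omega, by omega⟩) hw
      · intro x hx hv
        rw [Finset.mem_Ioo] at hx
        have : x ≤ pB := Finset.le_max' V' x
          (Finset.mem_filter.mpr ⟨Finset.mem_Icc.mpr ⟨by omega, by omega⟩, hv⟩)
        omega
    exact W.isCap_of_hh pB (b'+1) hpBmem.2 hab'.2.2.2.2 (by omega) (hz (b'+1) (by omega) le_rfl)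
      (fun t h1 h2 => le_of_eq (hz t h1 h2).symm)
  -- cap C
  obtain ⟨q, hcapC⟩ := W.cap_exists hpmem.2
  have hpq : p < q := hcapC.2.2.1
  have hqw : W.D q = Tag.wedge := hcapC.2.1
  have hq0 : W.hh p q = 0 := (W.capBal_iff_hh p q).mp hcapC.2.2.2.1
  -- any wedge in (p, b'] lies in the gap
  have hgap : ∀ t, p < t → t ≤ b' → W.D t = Tag.wedge → t ∈ G := by
    intro t h1 h2 hw
    have htb : b < t := by
      by_contra h; push_neg at h
      exact hab.2.1 t (Finset.mem_Icc.mpr ⟨by omega, h⟩) hw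
    have hta : t < a' := by
      by_contra h; push_neg at h
      exact hab'.2.1 t (Finset.mem_Icc.mpr ⟨h, h2⟩) hw
    exact Finset.mem_filter.mpr ⟨Finset.mem_Ioo.mpr ⟨htb, hta⟩, hw⟩
  -- q > b'
  have hqb' : b' < q := by
    by_contra h; push_neg at h
    have hqG : q ∈ G := hgap q hpq h hqw
    rw [hG, Finset.mem_filter, Finset.mem_Ioo] at hqG
    -- vcnt ≥ t1 - 1
    have hvsub : V.erase p ⊆ (Finset.Ioo p q).filter (fun x => W.D x = Tag.vee) := by
      intro x hx
      rw [Finset.mem_erase] at hx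
      have hmem := hx.2
      rw [hV, Finset.mem_filter, Finset.mem_Icc] at hmem
      have hge : p ≤ x := Finset.min'_le V x hx.2
      exact Finset.mem_filter.mpr ⟨Finset.mem_Ioo.mpr ⟨by omega, by omega⟩, hmem.2⟩
    have hvge := Finset.card_le_card hvsub
    rw [Finset.card_erase_of_mem (V.min'_mem hVne)] at hvge
    -- wcnt ≤ s - 1
    have hwsub : (Finset.Ioo p q).filter (fun x => W.D x = Tag.wedge) ⊆
        G.erase q := by
      intro x hx
      rw [Finset.mem_filter, Finset.mem_Ioo] at hx
      exact Finset.mem_erase.mpr ⟨by omega, hgap x hx.1.1 (by omega) hx.2⟩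
    have hwle := Finset.card_le_card hwsub
    rw [Finset.card_erase_of_mem (hgap q hpq h hqw)] at hwle
    have hq0' : (((Finset.Ioo p q).filter (fun x => W.D x = Tag.vee)).card : ℤ)
        - (((Finset.Ioo p q).filter (fun x => W.D x = Tag.wedge)).card : ℤ) = 0 := hq0
    omega
  -- q ≠ b' + 1
  have hqb'1 : q ≠ b' + 1 := by
    intro he
    -- compute hh p (b'+1) > 0
    have hvsub : V.erase p ∪ V' ⊆ (Finset.Ioo p (b'+1)).filter (fun x => W.D x = Tag.vee) := by
      intro x hx
      rw [Finset.mem_union] at hx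
      rcases hx with hx | hx
      · rw [Finset.mem_erase] at hx
        have hmem := hx.2
        rw [hV, Finset.mem_filter, Finset.mem_Icc] at hmem
        have hge : p ≤ x := Finset.min'_le V x hx.2
        exact Finset.mem_filter.mpr ⟨Finset.mem_Ioo.mpr ⟨by omega, by omega⟩, hmem.2⟩
      · have hmem := hx
        rw [hV', Finset.mem_filter, Finset.mem_Icc] at hmem
        exact Finset.mem_filter.mpr ⟨Finset.mem_Ioo.mpr ⟨by omega, by omega⟩, hmem.2⟩
    have hdisj : Disjoint (V.erase p) V' := by
      rw [Finset.disjoint_left]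
      intro x hx hx'
      rw [Finset.mem_erase, hV, Finset.mem_filter, Finset.mem_Icc] at hx
      rw [hV', Finset.mem_filter, Finset.mem_Icc] at hx'
      omega
    have hvge := Finset.card_le_card hvsub
    rw [Finset.card_union_of_disjoint hdisj,
        Finset.card_erase_of_mem (V.min'_mem hVne)] at hvge
    have hwsub : (Finset.Ioo p (b'+1)).filter (fun x => W.D x = Tag.wedge) ⊆ G := by
      intro x hx
      rw [Finset.mem_filter, Finset.mem_Ioo] at hx
      exact hgap x hx.1.1 (by omega) hx.2
    have hwle := Finset.card_le_card hwsub
    have ht'1 : 1 ≤ V'.card := Finset.card_pos.mpr hV'ne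
    have hq0' : (((Finset.Ioo p (b'+1)).filter (fun x => W.D x = Tag.vee)).card : ℤ)
        - (((Finset.Ioo p (b'+1)).filter (fun x => W.D x = Tag.wedge)).card : ℤ) = 0 :=
      he ▸ hq0
    omega
  exact ⟨p, q, pA, pB, hcapC, hcapA, hcapB, hppA, hpAmem.1.2, hpBmem.1.1, hpBmem.1.2,
    by omega, by omega⟩

end WDiag

open WDiag in
/-!
STATEMENT 5: A weight diagram is piecewise disconnected iff its cap diagram satisfies:
whenever two distinct caps `A` and `B` are both nested below the same cap `C`, either `A` is
nested below `B` or `B` is nested below `A`.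
-/
theorem stmt5 (W : WDiag) :
    W.PDC ↔
      ∀ pa qa pb qb pc qc, W.IsCap pa qa → W.IsCap pb qb → W.IsCap pc qc →
        WDiag.CapBelow pa qa pc qc → WDiag.CapBelow pb qb pc qc → (pa, qa) ≠ (pb, qb) →
        (WDiag.CapBelow pa qa pb qb ∨ WDiag.CapBelow pb qb pa qa) := by
  constructor
  · intro hpdc pa qa pb qb pc qc hA hB hC hAC hBC hne
    rcases lt_trichotomy pa pb with h | h | h
    · rcases lt_trichotomy pb qa with h2 | h2 | h2
      · right
        exact ⟨h, W.cap_noncross hA hB h h2⟩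
      · exfalso
        have h3 := hA.2.1
        rw [← h2, hB.1] at h3
        exact Tag.noConfusion h3
      · exact absurd (W.pdc_no_wedge_vee hpdc hC qa pb (lt_trans hAC.1 hA.2.2.1) h2
          (lt_trans hB.2.2.1 hBC.2) hA.2.1 hB.1) not_false
    · subst h
      have := W.cap_unique hA hB
      exact absurd (by rw [this]) hne
    · rcases lt_trichotomy pa qb with h2 | h2 | h2
      · left
        exact ⟨h, W.cap_noncross hB hA h h2⟩
      · exfalso
        have h3 := hB.2.1
        rw [← h2, hA.1] at h3
        exact Tag.noConfusion h3
      · exact absurd (W.pdc_no_wedge_vee hpdc hC qb pa (lt_trans hBC.1 hB.2.2.1) h2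
          (lt_trans hA.2.2.1 hAC.2) hB.2.1 hA.1) not_false
  · intro hcond a b a' b' hab hab' hba' hnbet
    by_contra hlt
    push_neg at hlt
    obtain ⟨p, q, pA, pB, hC, hA, hB, h1, h2, h3, h4, h5, h6⟩ :=
      W.not_pdc_config hab hab' hba' hnbet hlt
    have hres := hcond pA (b+1) pB (b'+1) p q hA hB hC ⟨h1, h5⟩ ⟨by omega, h6⟩
      (by intro e; rw [Prod.mk.injEq] at e; omega)
    have hb1a' : b + 1 < a' := by
      rcases eq_or_lt_of_le (show b + 1 ≤ a' by omega) with he | hgood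
      · exact absurd (he ▸ hab.2.2.2.2)
          (fun hw => hab'.2.1 a' (Finset.mem_Icc.mpr ⟨le_rfl, hab'.1⟩) hw)
      · exact hgood
    rcases hres with ⟨ha, hb⟩ | ⟨ha, hb⟩ <;> omega
end

section
/- Let D_μ and D_λ be weight diagrams with the same number r of ∨'s and identical typical entries (× and ∘ positions). There exists a right path from D_μ to D_λ (a sequence of right moves R_{i_1}∘⋯∘R_{i_k} with i_1 ≤ … ≤ i_k transforming D_μ into D_λ) if and only if, for every i, the position of the i-th ∨ (counted left to right) in D_μ is less than or equal to the position of the i-th ∨ in D_λ. -/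
/-!
A right move replaces the `∨` at `p` by a `∨` at its cap partner `q > p`. This can only lower the
number of `∨`'s at or to the left of any given point, so in sorted order every `∨` moves weakly to
the right; hence the inequalities are necessary.

Conversely, move the rightmost `∨` that has not yet reached its target. The `∨`'s to its right
already sit at their targets, so no `∨` lies between it and its own target, which carries a `∧`
because the typical entries agree. Hence the first `∧` to its right is its cap partner and lies no
farther than the target, and the move keeps the order of the `∨`'s. All later moves concern `∨`'s
weakly to its left, so the indices, in the order of application, are weakly decreasing: the
moves compose to a right path.
-/


namespace Finset

variable {α : Type*} [LinearOrder α] {s s' : Finset α} {r : ℕ}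

lemma card_filter_lt_orderEmbOfFin (h : #s = r) (i : Fin r) :
    #{x ∈ s | x < s.orderEmbOfFin h i} = i := by
  have : {x ∈ s | x < s.orderEmbOfFin h i} = (Iio i).map (s.orderEmbOfFin h).toEmbedding := by
    ext x
    constructor
    · intro hx
      obtain ⟨hxs, hxi⟩ := mem_filter.1 hx
      obtain ⟨j, rfl⟩ : x ∈ Set.range (s.orderEmbOfFin h) := by rwa [range_orderEmbOfFin]
      exact mem_map_of_mem _ (mem_Iio.2 ((s.orderEmbOfFin h).lt_iff_lt.1 hxi))
    · simp only [mem_map, mem_Iio, RelEmbedding.coe_toEmbedding, mem_filter]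
      rintro ⟨j, hj, rfl⟩
      exact ⟨orderEmbOfFin_mem s h j, (s.orderEmbOfFin h).lt_iff_lt.2 hj⟩
  rw [this, card_map, Fin.card_Iio]

lemma orderEmbOfFin_le_iff (h : #s = r) (i : Fin r) (v : α) :
    s.orderEmbOfFin h i ≤ v ↔ (i : ℕ) < #{x ∈ s | x ≤ v} := by
  rw [← card_filter_lt_orderEmbOfFin h i]
  constructor
  · intro hv
    refine card_lt_card ⟨fun x hx => ?_, fun hsub => ?_⟩
    · simp only [mem_filter] at hx ⊢
      exact ⟨hx.1, hx.2.le.trans hv⟩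
    · have := hsub (mem_filter.2 ⟨orderEmbOfFin_mem s h i, hv⟩)
      exact lt_irrefl _ (mem_filter.1 this).2
  · intro hcard
    by_contra! hv
    refine hcard.not_ge (card_le_card fun x hx => ?_)
    simp only [mem_filter] at hx ⊢
    exact ⟨hx.1, hx.2.trans_lt hv⟩

lemma orderEmbOfFin_le_orderEmbOfFin (h : #s = r) (h' : #s' = r)
    (hcount : ∀ v, #{x ∈ s' | x ≤ v} ≤ #{x ∈ s | x ≤ v}) (i : Fin r) :
    s.orderEmbOfFin h i ≤ s'.orderEmbOfFin h' i :=
  (orderEmbOfFin_le_iff h i _).2 <|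
    ((orderEmbOfFin_le_iff h' i _).1 le_rfl).trans_le (hcount _)

lemma card_filter_le_insert_erase_le {p q : α} (hp : p ∈ s) (hpq : p ≤ q) (v : α) :
    #{x ∈ insert q (s.erase p) | x ≤ v} ≤ #{x ∈ s | x ≤ v} := by
  rw [filter_insert, filter_erase]
  split_ifs with hqv
  · have hpv : p ∈ {x ∈ s | x ≤ v} := mem_filter.2 ⟨hp, hpq.trans hqv⟩
    calc #(insert q ({x ∈ s | x ≤ v}.erase p)) ≤ #({x ∈ s | x ≤ v}.erase p) + 1 := card_insert_le _ _
      _ = #{x ∈ s | x ≤ v} := card_erase_add_one hpv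
  · exact card_le_card (erase_subset _ _)

end Finset

open Finset in
lemma Nat.exists_last_lt_of_le {α : Type*} [PartialOrder α] {f g : ℕ → α} {r : ℕ}
    (hle : ∀ j < r, f j ≤ g j) (hne : ¬ ∀ j < r, f j = g j) :
    ∃ i < r, f i < g i ∧ ∀ j, i < j → j < r → f j = g j := by
  classical
  have hs : {j ∈ range r | f j < g j}.Nonempty := by
    obtain ⟨j, hj, hfg⟩ : ∃ j < r, f j ≠ g j := by simpa using hne
    exact ⟨j, mem_filter.2 ⟨mem_range.2 hj, (hle j hj).lt_of_ne hfg⟩⟩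
  obtain ⟨hi, hlt⟩ := mem_filter.1 (max'_mem _ hs)
  refine ⟨_, mem_range.1 hi, hlt, fun j hij hj => (hle j hj).eq_of_not_lt fun h => ?_⟩
  exact hij.not_ge (le_max' _ j (mem_filter.2 ⟨mem_range.2 hj, h⟩))

namespace WDiag

open Finset

variable {W W' Λ : WDiag} {r i j : ℕ} {p q t : ℤ}

lemma mem_veeFinset : t ∈ W.veeFinset ↔ W.D t = Tag.vee := by
  simp +contextual [veeFinset]

lemma nthVee_eq_orderEmbOfFin (hW : #W.veeFinset = r) (hi : i < r) :
    W.nthVee i = W.veeFinset.orderEmbOfFin hW ⟨i, hi⟩ := by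
  rw [orderEmbOfFin_apply, nthVee]
  exact List.getD_eq_getElem _ _ (by rwa [length_sort, hW])

lemma nthVee_isVee (hW : #W.veeFinset = r) (hi : i < r) : W.D (W.nthVee i) = Tag.vee := by
  rw [← mem_veeFinset, nthVee_eq_orderEmbOfFin hW hi]
  exact orderEmbOfFin_mem _ hW _

lemma nthVee_lt_nthVee (hW : #W.veeFinset = r) (hij : i < j) (hj : j < r) :
    W.nthVee i < W.nthVee j := by
  rw [nthVee_eq_orderEmbOfFin hW (hij.trans hj), nthVee_eq_orderEmbOfFin hW hj]
  exact (W.veeFinset.orderEmbOfFin hW).strictMono hij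

lemma nthVee_inj (hW : #W.veeFinset = r) (hi : i < r) (hj : j < r) :
    W.nthVee i = W.nthVee j ↔ i = j := by
  rw [nthVee_eq_orderEmbOfFin hW hi, nthVee_eq_orderEmbOfFin hW hj, EmbeddingLike.apply_eq_iff_eq,
    Fin.mk.injEq]

lemma exists_nthVee_eq (hW : #W.veeFinset = r) (ht : W.D t = Tag.vee) :
    ∃ i < r, W.nthVee i = t := by
  obtain ⟨i, hi⟩ : t ∈ Set.range (W.veeFinset.orderEmbOfFin hW) := by
    rw [range_orderEmbOfFin]; exact mem_veeFinset.2 ht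
  exact ⟨i, i.2, by rw [nthVee_eq_orderEmbOfFin hW i.2, ← hi]⟩

lemma nthVee_eq_of_strictMono (hW : #W.veeFinset = r) {f : Fin r → ℤ} (hf : StrictMono f)
    (hvee : ∀ k, W.D (f k) = Tag.vee) (k : Fin r) : W.nthVee k = f k := by
  rw [nthVee_eq_orderEmbOfFin hW k.2,
    ← orderEmbOfFin_unique hW (fun k => mem_veeFinset.2 (hvee k)) hf]

lemma eq_of_sameTypical (htyp : SameTypical W W') (hvee : ∀ t, W.D t = Tag.vee ↔ W'.D t = Tag.vee) :
    W = W' := by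
  obtain ⟨D, _⟩ := W
  obtain ⟨D', _⟩ := W'
  congr
  funext t
  have := htyp t
  have := hvee t
  cases h : D t <;> cases h' : D' t <;> simp_all

lemma eq_of_nthVee_eq (hW : #W.veeFinset = r) (hW' : #W'.veeFinset = r) (htyp : SameTypical W W')
    (h : ∀ j < r, W.nthVee j = W'.nthVee j) : W = W' := by
  refine eq_of_sameTypical htyp fun t => ⟨fun ht => ?_, fun ht => ?_⟩
  · obtain ⟨j, hj, rfl⟩ := exists_nthVee_eq hW ht
    exact h j hj ▸ nthVee_isVee hW' hj
  · obtain ⟨j, hj, rfl⟩ := exists_nthVee_eq hW' ht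
    exact (h j hj).symm ▸ nthVee_isVee hW hj

lemma moveDiag_D :
    (W.moveDiag p q).D t = if t = p then Tag.wedge else if t = q then Tag.vee else W.D t :=
  rfl

lemma veeFinset_moveDiag (hp : W.D p = Tag.vee) (hq : W.D q = Tag.wedge) :
    (W.moveDiag p q).veeFinset = insert q (W.veeFinset.erase p) := by
  ext t
  simp only [mem_veeFinset, mem_insert, mem_erase, moveDiag_D]
  split_ifs <;> grind

lemma card_veeFinset_moveDiag (hp : W.D p = Tag.vee) (hq : W.D q = Tag.wedge) :
    #(W.moveDiag p q).veeFinset = #W.veeFinset := by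
  have hqW : q ∉ W.veeFinset.erase p := fun h => by
    rw [mem_veeFinset.1 (mem_of_mem_erase h)] at hq; cases hq
  rw [veeFinset_moveDiag hp hq, card_insert_of_notMem hqW,
    card_erase_add_one (mem_veeFinset.2 hp)]

lemma sameTypical_of_rMove (h : RMove i W W') : SameTypical W' W := by
  obtain ⟨-, q, ⟨hp, hq, -⟩, rfl⟩ := h
  intro t
  simp only [moveDiag_D]
  split_ifs <;> simp_all

lemma SameTypical.trans {W'' : WDiag} (h : SameTypical W W') (h' : SameTypical W' W'') :
    SameTypical W W'' :=
  fun t => ⟨(h t).1.trans (h' t).1, (h t).2.trans (h' t).2⟩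

lemma isCap_of_forall_between (hp : W.D p = Tag.vee) (hq : W.D q = Tag.wedge) (hpq : p < q)
    (hbetween : ∀ x, p < x → x < q → W.D x ≠ Tag.vee ∧ W.D x ≠ Tag.wedge) : W.IsCap p q := by
  have hempty : ∀ q' ≤ q, ∀ T : Tag, T = Tag.vee ∨ T = Tag.wedge →
      {x ∈ Ioo p q' | W.D x = T} = ∅ := by
    rintro q' hq' T (rfl | rfl) <;>
      exact filter_eq_empty_iff.2 fun x hx => by
        obtain ⟨h₁, h₂⟩ := mem_Ioo.1 hx
        simp [hbetween x h₁ (h₂.trans_le hq')]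
  refine ⟨hp, hq, hpq, ?_, fun q' hpq' hq'q hq' _ => (hbetween q' hpq' hq'q).2 hq'⟩
  rw [capBal, hempty q le_rfl _ (.inl rfl), hempty q le_rfl _ (.inr rfl)]

lemma nthVee_moveDiag (hW : #W.veeFinset = r) (hi : i < r) (hq : W.D q = Tag.wedge)
    (hpq : W.nthVee i < q) (hfree : ∀ x, W.nthVee i < x → x < q → W.D x ≠ Tag.vee)
    (hj : j < r) : (W.moveDiag (W.nthVee i) q).nthVee j = Function.update W.nthVee i q j := by
  have hp := nthVee_isVee hW hi
  have hW' : #(W.moveDiag (W.nthVee i) q).veeFinset = r := (card_veeFinset_moveDiag hp hq).trans hW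
  have hgt : ∀ k : Fin r, i < k → q < W.nthVee k := fun k hik => by
    have hk := nthVee_isVee hW k.2
    have := nthVee_lt_nthVee hW hik k.2
    by_contra! hle
    rcases hle.lt_or_eq with hlt | heq
    · exact hfree _ this hlt hk
    · rw [heq, hq] at hk; cases hk
  refine nthVee_eq_of_strictMono hW' (f := fun k : Fin r => Function.update W.nthVee i q k)
    (fun k l hkl => ?_) (fun k => ?_) ⟨j, hj⟩
  · have hkl' : (k : ℕ) < l := hkl
    simp only [Function.update_apply]
    split_ifs with hk hl hl
    · omega
    · exact hgt l (by omega)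
    · exact (nthVee_lt_nthVee hW (by omega) hi).trans hpq
    · exact nthVee_lt_nthVee hW hkl' l.2
  · simp only [Function.update_apply]
    split_ifs with hk
    · simp [moveDiag_D, hpq.ne']
    · have hne : W.nthVee k ≠ W.nthVee i := (nthVee_inj hW k.2 hi).not.2 hk
      simp [moveDiag_D, hne, nthVee_isVee hW k.2]

lemma exists_rMove_le (hW : #W.veeFinset = r) (hΛ : #Λ.veeFinset = r) (htyp : SameTypical W Λ)
    (hi : i < r) (hagree : ∀ j, i < j → j < r → W.nthVee j = Λ.nthVee j)
    (hlt : W.nthVee i < Λ.nthVee i) :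
    ∃ q, W.nthVee i < q ∧ q ≤ Λ.nthVee i ∧ RMove i W (W.moveDiag (W.nthVee i) q) ∧
      ∀ j < r, (W.moveDiag (W.nthVee i) q).nthVee j = Function.update W.nthVee i q j := by
  have hfree : ∀ x, W.nthVee i < x → x ≤ Λ.nthVee i → W.D x ≠ Tag.vee := fun x hx hxt hvee => by
    obtain ⟨j, hj, rfl⟩ := exists_nthVee_eq hW hvee
    have hij : i < j := by
      by_contra! hji
      rcases hji.eq_or_lt with rfl | hji
      · exact hx.false
      · exact hx.not_gt (nthVee_lt_nthVee hW hji hi)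
    exact hxt.not_gt (hagree j hij hj ▸ nthVee_lt_nthVee hΛ hij hj)
  have htarget : W.D (Λ.nthVee i) = Tag.wedge := by
    have := nthVee_isVee hΛ hi
    have := hfree _ hlt le_rfl
    have := htyp (Λ.nthVee i)
    cases h : W.D (Λ.nthVee i) <;> simp_all
  obtain ⟨q, ⟨hpq, hq⟩, hfirst⟩ := Int.exists_least_of_bdd
    ⟨W.nthVee i, fun z hz => hz.1.le⟩ ⟨_, hlt, htarget⟩
      (P := fun z => W.nthVee i < z ∧ W.D z = Tag.wedge)
  have hqt : q ≤ Λ.nthVee i := hfirst _ ⟨hlt, htarget⟩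
  have hbetween : ∀ x, W.nthVee i < x → x < q → W.D x ≠ Tag.vee ∧ W.D x ≠ Tag.wedge :=
    fun x hx hxq => ⟨hfree x hx (hxq.le.trans hqt), fun hw => (hfirst x ⟨hx, hw⟩).not_gt hxq⟩
  refine ⟨q, hpq, hqt, ⟨hW ▸ hi, q, ?_, rfl⟩, fun j hj => ?_⟩
  · exact isCap_of_forall_between (nthVee_isVee hW hi) hq hpq hbetween
  · exact nthVee_moveDiag hW hi hq hpq (fun x hx hxq => (hbetween x hx hxq).1) hj

lemma nthVee_le_of_rMove (hW : #W.veeFinset = r) (h : RMove i W W') :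
    #W'.veeFinset = r ∧ ∀ j < r, W.nthVee j ≤ W'.nthVee j := by
  obtain ⟨-, q, ⟨hp, hq, hpq, -⟩, rfl⟩ := h
  have hW' := (card_veeFinset_moveDiag hp hq).trans hW
  refine ⟨hW', fun j hj => ?_⟩
  rw [nthVee_eq_orderEmbOfFin hW hj, nthVee_eq_orderEmbOfFin hW' hj]
  refine orderEmbOfFin_le_orderEmbOfFin hW hW' (fun v => ?_) _
  rw [veeFinset_moveDiag hp hq]
  exact card_filter_le_insert_erase_le (mem_veeFinset.2 hp) hpq.le v

lemma nthVee_le_of_pathRel {l : List ℕ} (hW : #W.veeFinset = r) (h : PathRel l W W') :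
    ∀ j < r, W.nthVee j ≤ W'.nthVee j := by
  induction l generalizing W with
  | nil => cases h; exact fun _ _ => le_rfl
  | cons i l ih =>
    obtain ⟨E, hE, hrest⟩ := h
    obtain ⟨hE', hle⟩ := nthVee_le_of_rMove hW hE
    exact fun j hj => (hle j hj).trans (ih hE' hrest j hj)

theorem exists_pathRel_of_le (hΛ : #Λ.veeFinset = r) (W : WDiag) (hW : #W.veeFinset = r)
    (htyp : SameTypical W Λ) (hle : ∀ j < r, W.nthVee j ≤ Λ.nthVee j) :
    ∃ l : List ℕ, l.IsChain (fun a b => b ≤ a) ∧ PathRel l W Λ ∧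
      ∀ x ∈ l, x < r ∧ W.nthVee x < Λ.nthVee x := by
  by_cases hdone : ∀ j < r, W.nthVee j = Λ.nthVee j
  · exact ⟨[], List.isChain_nil, eq_of_nthVee_eq hW hΛ htyp hdone, by simp⟩
  obtain ⟨i, hi, hlt, hagree⟩ := Nat.exists_last_lt_of_le hle hdone
  obtain ⟨q, hpq, hqt, hmove, hnth⟩ := exists_rMove_le hW hΛ htyp hi hagree hlt
  have hle' : ∀ j < r, (W.moveDiag (W.nthVee i) q).nthVee j ≤ Λ.nthVee j := fun j hj => by
    rw [hnth j hj, Function.update_apply]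
    split_ifs with hji
    exacts [hji ▸ hqt, hle j hj]
  obtain ⟨hW', hmono⟩ := nthVee_le_of_rMove hW hmove
  obtain ⟨l, hchain, hpath, hl⟩ := exists_pathRel_of_le hΛ (W.moveDiag (W.nthVee i) q) hW'
    ((sameTypical_of_rMove hmove).trans htyp) hle'
  have hl_le : ∀ x ∈ l, x ≤ i := fun x hx => by
    obtain ⟨hx, hxlt⟩ := hl x hx
    by_contra! hix
    rw [hnth x hx, Function.update_of_ne hix.ne', hagree x hix hx] at hxlt
    exact hxlt.false
  refine ⟨i :: l, List.isChain_cons.2 ⟨fun y hy => hl_le y (List.mem_of_mem_head? hy), hchain⟩,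
    ⟨_, hmove, hpath⟩, List.forall_mem_cons.2 ⟨⟨hi, hlt⟩, fun x hx => ?_⟩⟩
  obtain ⟨hxr, hxlt⟩ := hl x hx
  exact ⟨hxr, (hmono x hxr).trans_lt hxlt⟩
termination_by ∑ j ∈ range r, (Λ.nthVee j - W.nthVee j).toNat
decreasing_by
  refine sum_lt_sum (fun j hj => ?_) ⟨i, mem_range.2 hi, ?_⟩
  · rw [hnth j (mem_range.1 hj), Function.update_apply]
    split_ifs with hji
    · subst hji; omega
    · rfl
  · rw [hnth i hi, Function.update_self]
    omega

end WDiag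

open WDiag in
theorem stmt6 (r : ℕ) (Wmu Wlam : WDiag)
    (hmu : Wmu.veeFinset.card = r) (hlam : Wlam.veeFinset.card = r)
    (htyp : WDiag.SameTypical Wmu Wlam) :
    (∃ l : List ℕ, WDiag.IsRightPath Wmu Wlam l) ↔
      ∀ i < r, Wmu.nthVee i ≤ Wlam.nthVee i := by
  constructor
  · rintro ⟨l, -, hpath⟩
    exact nthVee_le_of_pathRel hmu hpath
  · intro hle
    obtain ⟨l, hchain, hpath, -⟩ := exists_pathRel_of_le hlam Wmu hmu htyp hle
    exact ⟨l, hchain, hpath⟩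
end

section
/- Let c_1 < c_2 < … < c_r be the atypical entries of a strictly dominant λ^ρ that is piecewise disconnected, with (λ^ρ)^⇑ as above. If ν ∈ (λ^ρ)^⇑ − ℕS_λ satisfies ν_{β_1} < ν_{β_2} < … < ν_{β_r} but ν ∉ λ^ρ − ℕS_λ, then ν is not regular, i.e. some atypical entry of ν coincides with a typical entry of λ^ρ or two entries of ν of the same type coincide. -/
open WDiag in
/-!
STATEMENT 14 (Lemma 4.8): `λ^ρ` is a strictly dominant integral weight of `gl(m|n)` with
`ε`-entries `a` (strictly decreasing) and `δ`-entries `b` (strictly increasing), whose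
diagram `wdOf a b` is piecewise disconnected.  Its atypical roots `β_i = ε_{p i} − δ_{q i}`
(an exhaustive list, ordered by increasing `δ`-index) have atypical entries
`c i = a (p i) = b (q i)`, strictly increasing; `up i` is the corresponding atypical entry of
`(λ^ρ)^⇑`, i.e. the maximal atypical entry of the atypical component of `c i`.  A weight
`ν ∈ (λ^ρ)^⇑ − ℕS_λ` agrees with `λ^ρ` in all typical entries and has atypical entries
`x i ≤ up i` (both its `ε_{p i}`- and `δ_{q i}`-entry equal `x i`); it is recorded by its
entry functions `ve` (for `ε`) and `vd` (for `δ`).  If `ν_{β_1} < … < ν_{β_r}` but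
`ν ∉ λ^ρ − ℕS_λ` (i.e. `x i > c i` for some `i`), then `ν` is not regular: two of its
entries of the same type coincide.
-/
theorem stmt14 (m n r : ℕ) (a : Fin m → ℤ) (b : Fin n → ℤ)
    (ha : StrictAnti a) (hb : StrictMono b)
    (p : Fin r → Fin m) (q : Fin r → Fin n) (hq : StrictMono q)
    (hatyp : ∀ i, a (p i) = b (q i))
    (hmax : ∀ i j, a i = b j → ∃ k, p k = i ∧ q k = j)
    (hpdc : (wdOf a b).PDC)
    (up : Fin r → ℤ)
    (hup : ∀ i, ∃ k, up i = a (p k) ∧ WDiag.SameComp (wdOf a b) (a (p i)) (a (p k)) ∧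
      ∀ k', WDiag.SameComp (wdOf a b) (a (p i)) (a (p k')) → a (p k') ≤ up i)
    (x : Fin r → ℤ) (hcone : ∀ i, x i ≤ up i) (hxmono : StrictMono x)
    (hnotin : ¬ ∀ i, x i ≤ a (p i))
    (ve : Fin m → ℤ) (vd : Fin n → ℤ)
    (hve : ∀ k, ve (p k) = x k) (hve' : ∀ i, (∀ k, p k ≠ i) → ve i = a i)
    (hvd : ∀ k, vd (q k) = x k) (hvd' : ∀ j, (∀ k, q k ≠ j) → vd j = b j) :
    ¬ (Function.Injective ve ∧ Function.Injective vd) := by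
  classical
  rintro ⟨hie, hid⟩
  push_neg at hnotin
  obtain ⟨i0, hi0⟩ := hnotin
  have hDvee : ∀ j : Fin r, (wdOf a b).D (a (p j)) = Tag.vee := by
    intro j
    show (if ∃ i, a i = a (p j) then (if ∃ j', b j' = a (p j) then Tag.vee else Tag.ex)
      else (if ∃ j', b j' = a (p j) then Tag.circ else Tag.wedge)) = Tag.vee
    rw [if_pos ⟨p j, rfl⟩, if_pos ⟨q j, (hatyp j).symm⟩]
  have hcup : ∀ j : Fin r, a (p j) ≤ up j := by
    intro j
    obtain ⟨k, hk1, hk2, hk3⟩ := hup j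
    apply hk3 j
    intro t ht
    simp only [min_self, max_self, Finset.mem_Icc] at ht
    have ht' : t = a (p j) := le_antisymm ht.2 ht.1
    rw [ht', hDvee]
    simp
  have hnw : ∀ j : Fin r, a (p j) < x j → (wdOf a b).D (x j) ≠ Tag.wedge := by
    intro j hj
    obtain ⟨k, hk1, hk2, hk3⟩ := hup j
    have hcu : a (p j) ≤ a (p k) := le_of_le_of_eq (hcup j) hk1
    apply hk2 (x j)
    rw [Finset.mem_Icc, min_eq_left hcu, max_eq_right hcu]
    exact ⟨hj.le, le_of_le_of_eq (hcone j) hk1⟩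
  have key : ∀ N, ∀ j : Fin r, r - (j : ℕ) ≤ N → a (p j) < x j → False := by
    intro N
    induction N with
    | zero =>
      intro j hjN _
      have := j.isLt
      omega
    | succ N ih =>
      intro j hjN hj
      have hw := hnw j hj
      by_cases hA : ∃ i', a i' = x j
      · by_cases hB : ∃ j', b j' = x j
        · obtain ⟨i', hi'⟩ := hA
          obtain ⟨j', hj'⟩ := hB
          obtain ⟨k, hpk, hqk⟩ := hmax i' j' (hi'.trans hj'.symm)
          have hak : a (p k) = x j := by rw [hpk]; exact hi'
          have hjk : j < k := by
            have hlt : b (q j) < b (q k) := by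
              rw [← hatyp j, ← hatyp k, hak]; exact hj
            exact hq.lt_iff_lt.mp (hb.lt_iff_lt.mp hlt)
          have hxk : a (p k) < x k := by rw [hak]; exact hxmono hjk
          have hjk' : (j : ℕ) < (k : ℕ) := hjk
          have hkr := k.isLt
          exact ih k (by omega) hxk
        · obtain ⟨i', hi'⟩ := hA
          have hnp : ∀ k'', p k'' ≠ i' := by
            intro k'' hk''
            exact hB ⟨q k'', by rw [← hatyp k'', hk'', hi']⟩
          have h1 : ve i' = x j := by rw [hve' i' hnp]; exact hi'
          have h2 : ve (p j) = x j := hve j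
          have he : i' = p j := hie (h1.trans h2.symm)
          rw [he] at hi'
          exact hj.ne hi'
      · by_cases hB : ∃ j', b j' = x j
        · obtain ⟨j', hj'⟩ := hB
          have hnq : ∀ k'', q k'' ≠ j' := by
            intro k'' hk''
            exact hA ⟨p k'', by rw [hatyp k'', hk'', hj']⟩
          have h1 : vd j' = x j := by rw [hvd' j' hnq]; exact hj'
          have h2 : vd (q j) = x j := hvd j
          have he : j' = q j := hid (h1.trans h2.symm)
          rw [he, ← hatyp j] at hj'
          exact hj.ne hj'
        · apply hw
          show (if ∃ i', a i' = x j then (if ∃ j', b j' = x j then Tag.vee else Tag.ex)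
            else (if ∃ j', b j' = x j then Tag.circ else Tag.wedge)) = Tag.wedge
          rw [if_neg hA, if_neg hB]
  exact key r i0 (Nat.sub_le _ _) hi0
end
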